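/- Fix a norm ‖·‖ on ℝ^d and let 1 ≤ p ≤ d. Let S be a finite Borel measure on S^{d-1}_+ with σ_j := ∫ a_j S(da) > 0 for all j = 1,…,d, and set σ_min := min_j σ_j, σ_max := max_j σ_j. Then for every matrix H ∈ [0,∞)^{d×d} and every pair of indices (i,j) with H_{ij} = max_{k,l} H_{kl}, one has ∫_{S^{d-1}_+} Σ_{k=1}^d |(H ⋄ a)_k − a_k| S(da) ≥ (max_{k,l} H_{kl}) · σ_j − σ_i. Consequently, if ∫_{S^{d-1}_+} Σ_{k=1}^d |(H ⋄ a)_k − a_k| S(da) ≤ Σ_{k=p+1}^d σ_k, then max_{k,l} H_{kl} ≤ (Σ_{k=p+1}^d σ_k + σ_max)/σ_min. -/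

import Mathlib

/-! The pointwise bound `H i j * a j - a i ≤ (H ⋄ a) i - a i` integrates to
`H i j σ_j - σ_i ≤ ∫ Σ_k |(H ⋄ a)_k - a_k| dS`. At a maximal entry this is the first claim;
bounding `σ_j ≥ σ_min` and `σ_i ≤ σ_max` then gives the second. -/

open MeasureTheory Finset

/-- Max-linear action of a nonnegative matrix on a vector:
`(H ⋄ x) i = max_l H i l * x l`. -/
noncomputable def maxVec {p d : ℕ} (H : Fin p → Fin d → ℝ) (x : Fin d → ℝ) : Fin p → ℝ :=
  fun i => ⨆ l, H i l * x l

noncomputable def recErr {d : ℕ} (H : Fin d → Fin d → ℝ) (S : Measure (Fin d → ℝ)) : ℝ :=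
  ∫ a, ∑ k, |maxVec H a k - a k| ∂S

section maxVec

variable {p d : ℕ} (H : Fin p → Fin d → ℝ)

theorem le_maxVec (a : Fin d → ℝ) (k : Fin p) (l : Fin d) : H k l * a l ≤ maxVec H a k :=
  le_ciSup (f := fun l => H k l * a l) (Finite.bddAbove_range _) l

theorem abs_maxVec_le [Nonempty (Fin d)] (a : Fin d → ℝ) (k : Fin p) :
    |maxVec H a k| ≤ ∑ l, |H k l * a l| := by
  have hterm : ∀ l, |H k l * a l| ≤ ∑ l, |H k l * a l| := fun l =>
    single_le_sum (f := fun l => |H k l * a l|) (fun _ _ => abs_nonneg _) (mem_univ l)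
  obtain ⟨l⟩ := ‹Nonempty (Fin d)›
  refine abs_le.2 ⟨?_, ciSup_le fun l => (le_abs_self _).trans (hterm l)⟩
  calc -∑ l, |H k l * a l| ≤ H k l * a l := neg_le_of_abs_le (hterm l)
    _ ≤ maxVec H a k := le_maxVec H a k l

theorem measurable_maxVec (k : Fin p) : Measurable fun a => maxVec H a k := by
  unfold maxVec; fun_prop

end maxVec

section recErr

variable {d : ℕ} (H : Fin d → Fin d → ℝ) {S : Measure (Fin d → ℝ)}

theorem integrable_recErr_integrand [Nonempty (Fin d)]
    (hS : ∀ l, Integrable (fun a : Fin d → ℝ => a l) S) :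
    Integrable (fun a => ∑ k, |maxVec H a k - a k|) S := by
  refine integrable_finsetSum _ fun k _ => ?_
  refine Integrable.mono' (g := fun a => ∑ l, |H k l * a l| + |a k|)
    ((integrable_finsetSum _ fun l _ => ((hS l).const_mul _).abs).add (hS k).abs)
    ((measurable_maxVec H k).sub (measurable_pi_apply k)).abs.aestronglyMeasurable
    (ae_of_all _ fun a => ?_)
  rw [Real.norm_eq_abs, abs_abs]
  exact (abs_sub _ _).trans (add_le_add_left (abs_maxVec_le H a k) _)

theorem entry_mul_integral_sub_integral_le_recErr [Nonempty (Fin d)]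
    (hS : ∀ l, Integrable (fun a : Fin d → ℝ => a l) S) (i j : Fin d) :
    H i j * (∫ a, a j ∂S) - ∫ a, a i ∂S ≤ recErr H S := by
  rw [← integral_const_mul, ← integral_sub ((hS j).const_mul _) (hS i)]
  refine integral_mono ((((hS j).const_mul _).sub (hS i))) (integrable_recErr_integrand H hS)
    fun a => ?_
  calc H i j * a j - a i ≤ maxVec H a i - a i := sub_le_sub_right (le_maxVec H a i j) _
    _ ≤ |maxVec H a i - a i| := le_abs_self _
    _ ≤ ∑ k, |maxVec H a k - a k| :=
      single_le_sum (f := fun k => |maxVec H a k - a k|) (fun _ _ => abs_nonneg _) (mem_univ i)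

theorem exists_entry_eq_iSup_iSup [Nonempty (Fin d)] :
    ∃ i j, H i j = ⨆ k, ⨆ l, H k l := by
  obtain ⟨i, hi⟩ := exists_eq_ciSup_of_finite (f := fun k => ⨆ l, H k l)
  obtain ⟨j, hj⟩ := exists_eq_ciSup_of_finite (f := fun l => H i l)
  exact ⟨i, j, hj.trans hi⟩

theorem iSup_iSup_le_of_recErr_le [Nonempty (Fin d)] (hH : ∀ i j, 0 ≤ H i j)
    (hS : ∀ j, 0 < ∫ a, a j ∂S) {B : ℝ} (hB : recErr H S ≤ B) :
    ⨆ k, ⨆ l, H k l ≤ (B + ⨆ j, ∫ a, a j ∂S) / ⨅ j, ∫ a, a j ∂S := by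
  obtain ⟨i, j, hij⟩ := exists_entry_eq_iSup_iSup H
  obtain ⟨m, hm⟩ := exists_eq_ciInf_of_finite (f := fun j => ∫ a, a j ∂S)
  have hint : ∀ l, Integrable (fun a : Fin d → ℝ => a l) S := fun l =>
    Integrable.of_integral_ne_zero (hS l).ne'
  have hlower := entry_mul_integral_sub_integral_le_recErr H hint i j
  have hmin : (⨅ j, ∫ a, a j ∂S) ≤ ∫ a, a j ∂S := ciInf_le (Finite.bddBelow_range _) j
  have hmax : (∫ a, a i ∂S) ≤ ⨆ j, ∫ a, a j ∂S := le_ciSup (f := fun j => ∫ a, a j ∂S) (Finite.bddAbove_range _) i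
  rw [le_div_iff₀ (hm ▸ hS m), ← hij]
  nlinarith [hH i j]

end recErr

theorem recErr_lower_bound_and_sup_entry_bound_general
    {p d : ℕ} (hp : 1 ≤ p) (hpd : p ≤ d)
    (S : Measure (Fin d → ℝ))
    (hS_pos : ∀ j, 0 < ∫ a, a j ∂S)
    (H : Fin d → Fin d → ℝ) (hH : ∀ i j, 0 ≤ H i j) :
    (∀ i j : Fin d, H i j = (⨆ k : Fin d, ⨆ l : Fin d, H k l) →
      (⨆ k : Fin d, ⨆ l : Fin d, H k l) * (∫ a, a j ∂S) - (∫ a, a i ∂S) ≤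
        ∫ a, ∑ k, |maxVec H a k - a k| ∂S) ∧
    ((∫ a, ∑ k, |maxVec H a k - a k| ∂S) ≤
        (∑ k ∈ univ.filter (fun k : Fin d => p ≤ (k : ℕ)), ∫ a, a k ∂S) →
      (⨆ k : Fin d, ⨆ l : Fin d, H k l) ≤
        ((∑ k ∈ univ.filter (fun k : Fin d => p ≤ (k : ℕ)), ∫ a, a k ∂S) +
            ⨆ j : Fin d, ∫ a, a j ∂S) / ⨅ j : Fin d, ∫ a, a j ∂S) := by
  have : Nonempty (Fin d) := Fin.pos_iff_nonempty.1 (hp.trans hpd)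
  refine ⟨fun i j hij => ?_, iSup_iSup_le_of_recErr_le H hH hS_pos⟩
  rw [← hij]
  exact entry_mul_integral_sub_integral_le_recErr H
    (fun l => Integrable.of_integral_ne_zero (hS_pos l).ne') i j

/-- Bounding step in the proof of Lemma S3 of the paper: for any nonnegative matrix
`H ∈ [0,∞)^{d×d}` and indices `(i,j)` realizing the maximal entry of `H`,
`∫ Σ_k |(H ⋄ a)_k − a_k| S(da) ≥ ‖H‖_∞ σ_j − σ_i`; consequently any `H` whose
reconstruction error is at most `Σ_{k=p+1}^d σ_k` satisfies
`‖H‖_∞ ≤ (Σ_{k=p+1}^d σ_k + σ_max)/σ_min`. -/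
theorem recErr_lower_bound_and_sup_entry_bound
    {p d : ℕ} (hp : 1 ≤ p) (hpd : p ≤ d)
    (N : (Fin d → ℝ) → ℝ)
    (hN_tri : ∀ x y, N (x + y) ≤ N x + N y)
    (hN_smul : ∀ (c : ℝ) (x), N (c • x) = |c| * N x)
    (hN_def : ∀ x, N x = 0 → x = 0)
    (S : Measure (Fin d → ℝ)) [IsFiniteMeasure S]
    (hS_sphere : S {a | ¬ ((∀ i, 0 ≤ a i) ∧ N a = 1)} = 0)
    (hS_pos : ∀ j, 0 < ∫ a, a j ∂S)
    (H : Fin d → Fin d → ℝ) (hH : ∀ i j, 0 ≤ H i j) :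
    (∀ i j : Fin d, H i j = (⨆ k : Fin d, ⨆ l : Fin d, H k l) →
      (⨆ k : Fin d, ⨆ l : Fin d, H k l) * (∫ a, a j ∂S) - (∫ a, a i ∂S) ≤
        ∫ a, ∑ k, |maxVec H a k - a k| ∂S) ∧
    ((∫ a, ∑ k, |maxVec H a k - a k| ∂S) ≤
        (∑ k ∈ univ.filter (fun k : Fin d => p ≤ (k : ℕ)), ∫ a, a k ∂S) →
      (⨆ k : Fin d, ⨆ l : Fin d, H k l) ≤
        ((∑ k ∈ univ.filter (fun k : Fin d => p ≤ (k : ℕ)), ∫ a, a k ∂S) +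
            ⨆ j : Fin d, ∫ a, a j ∂S) / ⨅ j : Fin d, ∫ a, a j ∂S) :=
  recErr_lower_bound_and_sup_entry_bound_general hp hpd S hS_pos H hH
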